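/- Let S, B, A be finite nonempty sets, let p : S × B × A → (S → ℝ) be a transition kernel (p(s'|s,b,a) ≥ 0 and sums to 1 over s'), let pb : S → (B → ℝ) be a probability distribution over B for each state (pb(b'|s') ≥ 0 summing to 1), let r : S × B × A → ℝ be bounded, and let 0 ≤ γ < 1. Define the operator H on functions q : S × B × A → ℝ by (Hq)(s,b,a) = Σ_{s'} p(s'|s,b,a) [ r(s,b,a) + γ · max_{a'} Σ_{b'} pb(b'|s') q(s',b',a') ]. Then H is a γ-contraction with respect to the supremum norm: ‖Hq₁ − Hq₂‖_∞ ≤ γ‖q₁ − q₂‖_∞. -/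

import Mathlib

/-!
Both stages of the operator are nonexpansive in the sup norm: averaging against a probability
vector (over `b'` with `pb`, over `s'` with `p`) and taking a maximum over `a'` each move values
by at most the largest pointwise change. The rewards cancel in `H q₁ - H q₂`, so the only
contraction comes from the factor `γ` in front of the maximum.
-/

theorem Finset.abs_sup'_sub_sup'_le {ι : Type*} {s : Finset ι} (hs : s.Nonempty) {f g : ι → ℝ}
    {C : ℝ} (h : ∀ i ∈ s, |f i - g i| ≤ C) : |s.sup' hs f - s.sup' hs g| ≤ C := by
  rw [abs_sub_le_iff, sub_le_iff_le_add, sub_le_iff_le_add]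
  constructor
  · refine Finset.sup'_le hs f fun i hi => ?_
    linarith [(abs_le.1 (h i hi)).2, Finset.le_sup' g hi]
  · refine Finset.sup'_le hs g fun i hi => ?_
    linarith [(abs_le.1 (h i hi)).1, Finset.le_sup' f hi]

theorem Finset.abs_sum_mul_sub_sum_mul_le {ι : Type*} {s : Finset ι} {w x y : ι → ℝ} {C : ℝ}
    (hw0 : ∀ i ∈ s, 0 ≤ w i) (hw1 : ∑ i ∈ s, w i = 1) (h : ∀ i ∈ s, |x i - y i| ≤ C) :
    |∑ i ∈ s, w i * x i - ∑ i ∈ s, w i * y i| ≤ C :=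
  calc |∑ i ∈ s, w i * x i - ∑ i ∈ s, w i * y i|
      = |∑ i ∈ s, w i * (x i - y i)| := by simp only [mul_sub, Finset.sum_sub_distrib]
    _ ≤ ∑ i ∈ s, |w i * (x i - y i)| := Finset.abs_sum_le_sum_abs _ _
    _ ≤ ∑ i ∈ s, w i * C := Finset.sum_le_sum fun i hi => by
        rw [abs_mul, abs_of_nonneg (hw0 i hi)]
        exact mul_le_mul_of_nonneg_left (h i hi) (hw0 i hi)
    _ = C := by rw [← Finset.sum_mul, hw1, one_mul]

theorem tmdp_bellman_contraction_general
    {S B A : Type*} [Fintype S] [Fintype B] [Fintype A]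
    [Nonempty A]
    (p : S → B → A → S → ℝ)
    (hp0 : ∀ s b a s', 0 ≤ p s b a s')
    (hp1 : ∀ s b a, ∑ s', p s b a s' = 1)
    (pb : S → B → ℝ)
    (hpb0 : ∀ s b, 0 ≤ pb s b)
    (hpb1 : ∀ s, ∑ b, pb s b = 1)
    (r : S → B → A → ℝ)
    (γ : ℝ) (hγ0 : 0 ≤ γ)
    (H : (S × B × A → ℝ) → (S × B × A → ℝ))
    (hH : ∀ q s b a, H q (s, b, a) =
      ∑ s', p s b a s' *
        (r s b a + γ * Finset.univ.sup' Finset.univ_nonempty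
          (fun a' => ∑ b', pb s' b' * q (s', b', a'))))
    (q₁ q₂ : S × B × A → ℝ) :
    ‖H q₁ - H q₂‖ ≤ γ * ‖q₁ - q₂‖ := by
  have hq : ∀ x, |q₁ x - q₂ x| ≤ ‖q₁ - q₂‖ := fun x => by
    simpa using norm_le_pi_norm (q₁ - q₂) x
  have hmax : ∀ s', |Finset.univ.sup' Finset.univ_nonempty
        (fun a' => ∑ b', pb s' b' * q₁ (s', b', a')) -
      Finset.univ.sup' Finset.univ_nonempty
        (fun a' => ∑ b', pb s' b' * q₂ (s', b', a'))| ≤ ‖q₁ - q₂‖ := fun s' =>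
    Finset.abs_sup'_sub_sup'_le _ fun a' _ =>
      Finset.abs_sum_mul_sub_sum_mul_le (fun b' _ => hpb0 s' b') (hpb1 s') fun b' _ => hq _
  refine (pi_norm_le_iff_of_nonneg (by positivity)).2 fun ⟨s, b, a⟩ => ?_
  rw [Pi.sub_apply, Real.norm_eq_abs, hH, hH]
  refine Finset.abs_sum_mul_sub_sum_mul_le (fun s' _ => hp0 s b a s') (hp1 s b a) fun s' _ => ?_
  rw [add_sub_add_left_eq_sub, ← mul_sub, abs_mul, abs_of_nonneg hγ0]
  exact mul_le_mul_of_nonneg_left (hmax s') hγ0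

/-- The TMDP Bellman operator is a γ-contraction in the supremum norm. -/
theorem tmdp_bellman_contraction
    {S B A : Type*} [Fintype S] [Fintype B] [Fintype A]
    [Nonempty S] [Nonempty B] [Nonempty A]
    (p : S → B → A → S → ℝ)
    (hp0 : ∀ s b a s', 0 ≤ p s b a s')
    (hp1 : ∀ s b a, ∑ s', p s b a s' = 1)
    (pb : S → B → ℝ)
    (hpb0 : ∀ s b, 0 ≤ pb s b)
    (hpb1 : ∀ s, ∑ b, pb s b = 1)
    (r : S → B → A → ℝ)
    (γ : ℝ) (hγ0 : 0 ≤ γ) (hγ1 : γ < 1)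
    (H : (S × B × A → ℝ) → (S × B × A → ℝ))
    (hH : ∀ q s b a, H q (s, b, a) =
      ∑ s', p s b a s' *
        (r s b a + γ * Finset.univ.sup' Finset.univ_nonempty
          (fun a' => ∑ b', pb s' b' * q (s', b', a'))))
    (q₁ q₂ : S × B × A → ℝ) :
    ‖H q₁ - H q₂‖ ≤ γ * ‖q₁ - q₂‖ :=
  tmdp_bellman_contraction_general p hp0 hp1 pb hpb0 hpb1 r γ hγ0 H hH q₁ q₂
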